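/- Let M ∈ ℕ, let 𝒢 = (G_1, …, G_G) be a partition of Fin M into G ≥ 1 nonempty pairwise disjoint groups whose union is Fin M, and let v : Finset (Fin M) → ℝ be any set function. Then the groupShapley values satisfy the efficiency property: ∑_{i=1}^G φ_{G_i} = v(univ) − v(∅), where univ is the full feature set Fin M. -/

import Mathlib

/-!
The group Shapley value is the ordinary Shapley value of the quotient game `S ↦ v (⋃_{k ∈ S} G_k)`
on the set of groups, and `hcover` identifies the grand coalition of that game with `univ`.
For Shapley values, collect the terms of `∑ i, φ i` by coalition: with `c k = k! (n - k - 1)! / n!`,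
the worth `w S` enters with coefficient `#S · c (#S - 1)` (as `insert i T` for `i ∈ S`) minus
`(n - #S) · c #S` (as `T` for `i ∉ S`). Both products equal `#S! (n - #S)! / n!`, so only
`S = univ` and `S = ∅` survive, leaving `w univ - w ∅`.
-/

/-- The groupShapley value of group `G i` for contribution function `v` and
partition `G` of the features into `Gn` groups. -/
noncomputable def groupShapley {M Gn : ℕ} (G : Fin Gn → Finset (Fin M))
    (v : Finset (Fin M) → ℝ) (i : Fin Gn) : ℝ :=
  ∑ T ∈ (Finset.univ.erase i).powerset,
    ((T.card.factorial * (Gn - T.card - 1).factorial : ℕ) : ℝ) / (Gn.factorial : ℕ) *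
      (v (T.biUnion G ∪ G i) - v (T.biUnion G))

open scoped Nat

namespace Finset

variable {ι β : Type*} [Fintype ι] [DecidableEq ι] [AddCommMonoid β]

theorem sum_powerset_erase_insert (i : ι) (F : Finset ι → β) :
    ∑ T ∈ (univ.erase i).powerset, F (insert i T) = ∑ S, if i ∈ S then F S else 0 := by
  have h := sum_powerset_insert (notMem_erase i univ) fun S => if i ∈ S then F S else 0
  rw [insert_erase (mem_univ i), powerset_univ] at h
  rw [h, sum_eq_zero fun T hT => if_neg fun hi => notMem_erase i univ (mem_powerset.1 hT hi),
    zero_add]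
  exact sum_congr rfl fun T _ => (if_pos (mem_insert_self i T)).symm

theorem sum_sum_powerset_erase_insert (F : Finset ι → β) :
    ∑ i, ∑ T ∈ (univ.erase i).powerset, F (insert i T) = ∑ S, #S • F S := by
  simp_rw [sum_powerset_erase_insert]
  rw [sum_comm]
  refine sum_congr rfl fun S _ => ?_
  rw [← sum_filter, filter_mem_eq_inter, univ_inter, sum_const]

theorem sum_sum_powerset_erase (F : Finset ι → β) :
    ∑ i, ∑ T ∈ (univ.erase i).powerset, F T = ∑ S, (Fintype.card ι - #S) • F S := by
  have h : ∀ i, (univ.erase i).powerset = univ.filter fun T : Finset ι => i ∉ T := fun i => by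
    ext T
    simp [subset_erase]
  simp_rw [h, sum_filter]
  rw [sum_comm]
  refine sum_congr rfl fun S _ => ?_
  rw [← sum_filter, sum_const, filter_not, filter_mem_eq_inter, univ_inter,
    ← compl_eq_univ_sdiff, card_compl]

end Finset

open Finset

noncomputable def shapleyWeight (n k : ℕ) : ℝ :=
  ((k ! * (n - k - 1)! : ℕ) : ℝ) / (n ! : ℕ)

theorem natCast_mul_shapleyWeight_pred {n k : ℕ} (hk : 0 < k) (hkn : k ≤ n) :
    (k : ℝ) * shapleyWeight n (k - 1) = ((k ! * (n - k)! : ℕ) : ℝ) / (n ! : ℕ) := by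
  rw [shapleyWeight, show n - (k - 1) - 1 = n - k by omega, ← mul_div_assoc, ← Nat.cast_mul,
    ← mul_assoc, Nat.mul_factorial_pred hk.ne']

theorem natCast_sub_mul_shapleyWeight {n k : ℕ} (hkn : k < n) :
    ((n - k : ℕ) : ℝ) * shapleyWeight n k = ((k ! * (n - k)! : ℕ) : ℝ) / (n ! : ℕ) := by
  rw [shapleyWeight, ← mul_div_assoc, ← Nat.cast_mul, mul_left_comm,
    Nat.mul_factorial_pred (by omega)]

theorem shapleyWeight_balance {n k : ℕ} (hkn : k ≤ n) :
    (k : ℝ) * shapleyWeight n (k - 1) - ((n - k : ℕ) : ℝ) * shapleyWeight n k =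
      (if k = n then 1 else 0) - (if k = 0 then 1 else 0) := by
  rcases hkn.lt_or_eq with hlt | rfl
  · rw [natCast_sub_mul_shapleyWeight hlt, if_neg hlt.ne]
    rcases k.eq_zero_or_pos with rfl | hk
    · simp [Nat.factorial_ne_zero]
    · rw [natCast_mul_shapleyWeight_pred hk hlt.le, if_neg hk.ne', sub_self, sub_self]
  · rcases k.eq_zero_or_pos with rfl | hk
    · simp
    · rw [natCast_mul_shapleyWeight_pred hk le_rfl, if_pos rfl, if_neg hk.ne']
      simp [Nat.factorial_ne_zero]

section Shapley

variable {ι : Type*} [Fintype ι] [DecidableEq ι]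

noncomputable def shapley (w : Finset ι → ℝ) (i : ι) : ℝ :=
  ∑ T ∈ (univ.erase i).powerset, shapleyWeight (Fintype.card ι) #T * (w (insert i T) - w T)

theorem sum_shapley_eq_sum_mul (w : Finset ι → ℝ) :
    ∑ i, shapley w i = ∑ S, ((#S : ℝ) * shapleyWeight (Fintype.card ι) (#S - 1)
      - ((Fintype.card ι - #S : ℕ) : ℝ) * shapleyWeight (Fintype.card ι) #S) * w S := by
  have hinsert : ∀ i, ∑ T ∈ (univ.erase i).powerset,
      shapleyWeight (Fintype.card ι) #T * w (insert i T) = ∑ T ∈ (univ.erase i).powerset,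
      shapleyWeight (Fintype.card ι) (#(insert i T) - 1) * w (insert i T) :=
    fun i => sum_congr rfl fun T hT => by
      rw [card_insert_of_notMem fun hi => notMem_erase i univ (mem_powerset.1 hT hi),
        Nat.add_sub_cancel]
  simp_rw [shapley, mul_sub, sum_sub_distrib, hinsert]
  rw [sum_sum_powerset_erase_insert fun S => shapleyWeight (Fintype.card ι) (#S - 1) * w S,
    sum_sum_powerset_erase, ← sum_sub_distrib]
  simp_rw [nsmul_eq_mul, sub_mul, mul_assoc]

theorem sum_shapley (w : Finset ι → ℝ) : ∑ i, shapley w i = w univ - w ∅ := by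
  calc ∑ i, shapley w i
      = ∑ S, ((if S = univ then w S else 0) - if S = ∅ then w S else 0) := by
        rw [sum_shapley_eq_sum_mul]
        refine sum_congr rfl fun S _ => ?_
        rw [shapleyWeight_balance (card_le_univ S)]
        simp only [card_eq_iff_eq_univ, card_eq_zero]
        split_ifs <;> ring
    _ = w univ - w ∅ := by
        rw [sum_sub_distrib, sum_ite_eq', sum_ite_eq', if_pos (mem_univ _), if_pos (mem_univ _)]

end Shapley

theorem groupShapley_eq_shapley {M Gn : ℕ} (G : Fin Gn → Finset (Fin M))
    (v : Finset (Fin M) → ℝ) (i : Fin Gn) :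
    groupShapley G v i = shapley (fun S => v (S.biUnion G)) i := by
  rw [groupShapley, shapley, Fintype.card_fin]
  refine sum_congr rfl fun T _ => ?_
  rw [biUnion_insert, union_comm]
  rfl

theorem groupShapley_efficiency_general
    (M Gn : ℕ) (G : Fin Gn → Finset (Fin M))
    (hcover : Finset.univ.biUnion G = (Finset.univ : Finset (Fin M)))
    (v : Finset (Fin M) → ℝ) :
    ∑ i : Fin Gn, groupShapley G v i = v Finset.univ - v ∅ := by
  simp_rw [groupShapley_eq_shapley]
  rw [sum_shapley, hcover, biUnion_empty]

/-- Efficiency property of groupShapley values: they sum to `v univ - v ∅`. -/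
theorem groupShapley_efficiency
    (M Gn : ℕ) (hGn : 1 ≤ Gn) (G : Fin Gn → Finset (Fin M))
    (hne : ∀ i, (G i).Nonempty)
    (hdisj : ∀ i j : Fin Gn, i ≠ j → Disjoint (G i) (G j))
    (hcover : Finset.univ.biUnion G = (Finset.univ : Finset (Fin M)))
    (v : Finset (Fin M) → ℝ) :
    ∑ i : Fin Gn, groupShapley G v i = v Finset.univ - v ∅ :=
  groupShapley_efficiency_general M Gn G hcover v
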